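/- Let C be a linear [n,k] code over F_{q^2} with parity check matrix H, and let H† denote the conjugate transpose of H where conjugation is a ↦ a^q. Then rank(H·H†) = n - k - dim(C ∩ C^{⊥h}), where C^{⊥h} is the Hermitian dual of C. In particular this rank is independent of the choice of H. -/

import Mathlib

def hermDual {F : Type*} [Field F] {ι : Type*} [Fintype ι] (q : ℕ)
    (C : Submodule F (ι → F)) : Submodule F (ι → F) where
  carrier := {v | ∀ w ∈ C, ∑ i, v i * (w i) ^ q = 0}
  add_mem' := by
    intro a b ha hb w hw
    simp only [Set.mem_setOf_eq] at *
    simp [Pi.add_apply, add_mul, Finset.sum_add_distrib, ha w hw, hb w hw]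
  zero_mem' := by intro w hw; simp
  smul_mem' := by
    intro c a ha w hw
    simp only [Set.mem_setOf_eq] at *
    simp [Pi.smul_apply, smul_eq_mul, mul_assoc, ← Finset.mul_sum, ha w hw]

/-!
Since `|F| = q²`, conjugation `a ↦ a^q` is an involutive field automorphism `σ`. The conjugated
rows of `H` lie in `C^{⊥h}`, so `C ⊆ ker H`, and counting dimensions gives `ker H = C`; conjugating
the independent rows of `H` keeps them independent, so the columns of `H†` form a basis of
`C^{⊥h}`. Hence `H H†` has the rank of `H` restricted to `C^{⊥h}`, which by rank–nullity is
`dim C^{⊥h} - dim (ker H ∩ C^{⊥h}) = n - k - dim (C ∩ C^{⊥h})`.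
-/

open Module Matrix

theorem Submodule.finrank_map_add_finrank_ker_inf {K V W : Type*} [DivisionRing K]
    [AddCommGroup V] [Module K V] [AddCommGroup W] [Module K W] [FiniteDimensional K V]
    (f : V →ₗ[K] W) (D : Submodule K V) :
    finrank K (D.map f) + finrank K ↥(LinearMap.ker f ⊓ D) = finrank K D := by
  have h := LinearMap.finrank_range_add_finrank_ker (f.domRestrict D)
  rwa [LinearMap.range_domRestrict, LinearMap.ker_domRestrict, ← Submodule.finrank_map_subtype_eq,
    Submodule.map_comap_subtype, inf_comm] at h

theorem Matrix.rank_mul_add_finrank_ker_inf_range {K l m n : Type*} [Field K] [Fintype m]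
    [Fintype n] (A : Matrix l m K) (B : Matrix m n K) :
    (A * B).rank + finrank K ↥(LinearMap.ker A.mulVecLin ⊓ LinearMap.range B.mulVecLin) =
      B.rank := by
  rw [rank, rank, mulVecLin_mul, LinearMap.range_comp]
  exact Submodule.finrank_map_add_finrank_ker_inf _ _

theorem Matrix.ker_mulVecLin_eq_of_le {K m n : Type*} [Field K] [Fintype m] [Fintype n]
    {H : Matrix m n K} (hH : LinearIndependent K H.row) {C : Submodule K (n → K)}
    (hle : C ≤ LinearMap.ker H.mulVecLin) (hdim : Fintype.card m + finrank K C = Fintype.card n) :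
    LinearMap.ker H.mulVecLin = C := by
  refine (Submodule.eq_of_le_of_finrank_le hle ?_).symm
  have h := LinearMap.finrank_range_add_finrank_ker H.mulVecLin
  rw [← rank, hH.rank_matrix, finrank_fintype_fun_eq_card] at h
  omega

theorem LinearIndependent.ringHom_comp {K ι n : Type*} [Field K] {σ : K →+* K}
    (hσ : Function.Surjective σ) {v : ι → n → K} (hv : LinearIndependent K v) :
    LinearIndependent K (fun i ↦ σ ∘ v i) :=
  hv.map_of_surjective_injectiveₛ σ (σ.toAddMonoidHom.compLeft n)
    hσ (fun _ _ h ↦ funext fun j ↦ σ.injective (congrFun h j))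
    (fun r v ↦ funext fun j ↦ map_mul σ r (v j))

theorem FiniteField.exists_ringHom_eq_pow {F : Type*} [Field F] [Fintype F] {q m : ℕ}
    (hm : m ≠ 0) (hq : Fintype.card F = q ^ m) : ∃ σ : F →+* F, ∀ x, σ x = x ^ q := by
  obtain ⟨r, hp, hcard⟩ := FiniteField.card F (ringChar F)
  have : Fact (ringChar F).Prime := ⟨hp⟩
  obtain ⟨s, -, rfl⟩ := (Nat.dvd_prime_pow hp).mp
    (hcard ▸ hq ▸ dvd_pow_self q hm : q ∣ ringChar F ^ (r : ℕ))
  exact ⟨iterateFrobenius F (ringChar F) s, fun x ↦ iterateFrobenius_def ..⟩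

theorem FiniteField.pow_pow_eq_self_of_card_eq_sq {F : Type*} [Field F] [Fintype F] {q : ℕ}
    (hq : Fintype.card F = q ^ 2) (x : F) : (x ^ q) ^ q = x := by
  rw [← pow_mul, ← sq, ← hq, FiniteField.pow_card]

theorem le_ker_mulVecLin_of_pow_row_mem_hermDual {F m n : Type*} [Field F] [Fintype m]
    [Fintype n] {q : ℕ} {σ : F →+* F} (hσ : ∀ x, σ x = x ^ q) {H : Matrix m n F}
    {C : Submodule F (n → F)} (h : ∀ i, (fun j ↦ H i j ^ q) ∈ hermDual q C) :
    C ≤ LinearMap.ker H.mulVecLin := by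
  intro v hv
  ext i
  apply σ.injective
  rw [Pi.zero_apply, map_zero, ← h i v hv]
  simp only [mulVecLin_apply, mulVec, dotProduct, map_sum, map_mul]
  simp only [hσ]

/-- Let `C` be an `[n,k]` linear code over `F_{q^2}` with parity check matrix `H`
(a full-rank `(n-k) × n` matrix whose conjugated rows form a basis of the Hermitian dual
`C^{⊥h}`, conjugation being `a ↦ a^q`).  Then `rank (H * H†) = n - k - dim (C ⊓ C^{⊥h})`;
in particular it does not depend on the choice of `H`. -/
theorem stmt3 {F : Type*} [Field F] [Fintype F] {q n k : ℕ}
    (hq : Fintype.card F = q ^ 2) (hkn : k ≤ n)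
    (C : Submodule F (Fin n → F)) (hC : Module.finrank F C = k)
    (H : Matrix (Fin (n - k)) (Fin n) F)
    (hind : LinearIndependent F (fun i => H i))
    (hspan : Submodule.span F (Set.range (fun i j => (H i j) ^ q)) = hermDual q C) :
    (H * (H.map (· ^ q)).transpose).rank
      = n - k - Module.finrank F ↥(C ⊓ hermDual q C) := by
  obtain ⟨σ, hσ⟩ := FiniteField.exists_ringHom_eq_pow two_ne_zero hq
  have hσ_surj : Function.Surjective σ := Function.Involutive.surjective fun x ↦ by
    rw [hσ, hσ, FiniteField.pow_pow_eq_self_of_card_eq_sq hq]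
  have hconj : H.map (· ^ q) = H.map σ := by ext; simp [hσ]
  have hker : LinearMap.ker H.mulVecLin = C :=
    ker_mulVecLin_eq_of_le hind (le_ker_mulVecLin_of_pow_row_mem_hermDual hσ fun i ↦
      hspan ▸ Submodule.subset_span ⟨i, rfl⟩) (by rw [Fintype.card_fin, Fintype.card_fin, hC]; omega)
  have hrange : LinearMap.range (H.map σ)ᵀ.mulVecLin = hermDual q C := by
    rw [range_mulVecLin, col_transpose, ← hspan, ← hconj]
    rfl
  have hrank : (H.map σ)ᵀ.rank = n - k := by
    rw [rank_transpose]
    exact (hind.ringHom_comp hσ_surj).rank_matrix.trans (Fintype.card_fin _)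
  have h := rank_mul_add_finrank_ker_inf_range H (H.map σ)ᵀ
  rw [hker, hrange, hrank] at h
  rw [hconj]
  omega
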